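/- arXiv:2101.05032 — 2 statements merged into one kernel-verified Lean document; each statement's English description precedes it below -/
import Mathlib

section
/- For all real x ≥ 2, the unique y > 1 satisfying y * log₂ y = x (the inverse of W(y) = y log₂ y on (1,∞)) satisfies x / log₂ x ≤ y ≤ 2x / log₂ x. -/
/-! From `y log₂ y = x` we get `y ≤ x`, hence `log₂ y ≤ log₂ x` and `x / log₂ x ≤ x / log₂ y = y`.
Conversely `log₂ y ≤ y` gives `x ≤ y²`, hence `log₂ x ≤ 2 log₂ y` and `y = x / log₂ y ≤ 2x / log₂ x`. -/

open Real

lemma Real.logb_two_le_self {y : ℝ} (hy : 0 < y) : logb 2 y ≤ y := by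
  rcases le_or_gt y 1 with hy1 | hy1
  · exact (logb_nonpos one_lt_two hy.le hy1).trans hy.le
  · have bernoulli : 1 + y ≤ (2 : ℝ) ^ y := by
      have := one_add_mul_self_le_rpow_one_add (s := 1) (by norm_num) hy1.le
      norm_num at this
      linarith
    calc logb 2 y ≤ logb 2 ((2 : ℝ) ^ y) := logb_le_logb_of_le one_lt_two hy (by linarith)
      _ = y := logb_rpow two_pos (by norm_num)

lemma Real.le_mul_logb_two_self {y : ℝ} (hy : 2 ≤ y) : y ≤ y * logb 2 y := by
  have : 1 ≤ logb 2 y := by simpa using logb_le_logb_of_le one_lt_two two_pos hy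
  nlinarith

lemma Real.logb_two_mul_logb_two_le {y : ℝ} (hy : 1 < y) :
    logb 2 (y * logb 2 y) ≤ 2 * logb 2 y := by
  have hy0 : 0 < y := one_pos.trans hy
  have hWy : y * logb 2 y ≤ y ^ 2 := by
    rw [sq]; exact mul_le_mul_of_nonneg_left (logb_two_le_self hy0) hy0.le
  calc logb 2 (y * logb 2 y) ≤ logb 2 (y ^ 2) :=
        logb_le_logb_of_le one_lt_two (mul_pos hy0 (logb_pos one_lt_two hy)) hWy
    _ = 2 * logb 2 y := by rw [logb_pow]; norm_num

theorem stmt_0 (x y : ℝ) (hx : 2 ≤ x) (hy : 1 < y)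
    (hW : y * Real.logb 2 y = x) :
    x / Real.logb 2 x ≤ y ∧ y ≤ 2 * x / Real.logb 2 x := by
  have hLy : 0 < logb 2 y := logb_pos one_lt_two hy
  have hLx : 0 < logb 2 x := logb_pos one_lt_two (by linarith)
  have hyx : y ≤ x := by
    rcases lt_or_ge y 2 with hy2 | hy2
    · linarith
    · exact hW ▸ le_mul_logb_two_self hy2
  have hy_eq : y = x / logb 2 y := by rw [← hW, mul_div_cancel_right₀ _ hLy.ne']
  constructor
  · rw [hy_eq]
    exact div_le_div_of_nonneg_left (by linarith) hLy
      (logb_le_logb_of_le one_lt_two (by linarith) hyx)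
  · calc y = 2 * x / (2 * logb 2 y) := by rw [mul_div_mul_left _ _ two_ne_zero, ← hy_eq]
      _ ≤ 2 * x / logb 2 x :=
        div_le_div_of_nonneg_left (by linarith) hLx (hW ▸ logb_two_mul_logb_two_le hy)
end

section
/- For all real ε with 0 < ε < 1 and r = (2(1+ε) + √(2ε² + 4ε + 4))/ε, we have 1/log₂(r/(r−1)) < 5/ε. -/
/-! Since `log x ≥ 1 - 1/x`, we get `log (r/(r-1)) ≥ 1/r`, so `1 / log₂ (r/(r-1)) ≤ r log 2`.
For this `r` we have `r ε = 2(1+ε) + √(2ε² + 4ε + 4) < 4 + √10`, and `(4 + √10) log 2 < 5`. -/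

open Real

lemma Real.inv_le_log_div_sub_one {r : ℝ} (hr : 1 < r) : r⁻¹ ≤ log (r / (r - 1)) := by
  have h := one_sub_inv_le_log_of_pos (div_pos (by linarith : 0 < r) (by linarith : 0 < r - 1))
  rwa [inv_div, one_sub_div (by positivity), sub_sub_cancel, one_div] at h

lemma Real.one_div_logb_div_sub_one_le {b r : ℝ} (hb : 1 < b) (hr : 1 < r) :
    1 / logb b (r / (r - 1)) ≤ r * log b := by
  have hlog : 0 < log (r / (r - 1)) :=
    (inv_pos.2 (by linarith)).trans_le (inv_le_log_div_sub_one hr)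
  rw [← log_div_log, one_div_div, div_le_iff₀ hlog]
  calc log b = r * log b * r⁻¹ := by field_simp
    _ ≤ r * log b * log (r / (r - 1)) := by
      gcongr
      · exact mul_nonneg (by linarith) (log_nonneg hb.le)
      · exact inv_le_log_div_sub_one hr

lemma add_sqrt_mul_log_two_lt_five {ε : ℝ} (hε0 : 0 < ε) (hε1 : ε < 1) :
    (2 * (1 + ε) + √(2 * ε ^ 2 + 4 * ε + 4)) * log 2 < 5 := by
  have hsqrt : √(2 * ε ^ 2 + 4 * ε + 4) < 3.163 := by
    rw [sqrt_lt' (by norm_num)]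
    nlinarith
  have hlog2 : log 2 < 0.6931471808 := log_two_lt_d9
  nlinarith [log_pos (by norm_num : (1 : ℝ) < 2), sqrt_nonneg (2 * ε ^ 2 + 4 * ε + 4)]

theorem stmt_11 (ε r : ℝ) (hε0 : 0 < ε) (hε1 : ε < 1)
    (hr : r = (2 * (1 + ε) + Real.sqrt (2 * ε ^ 2 + 4 * ε + 4)) / ε) :
    1 / Real.logb 2 (r / (r - 1)) < 5 / ε := by
  have hrε : r * ε = 2 * (1 + ε) + √(2 * ε ^ 2 + 4 * ε + 4) := by
    rw [hr, div_mul_cancel₀ _ hε0.ne']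
  have hr1 : 1 < r := by
    rw [← mul_lt_mul_iff_left₀ hε0, one_mul, hrε]
    nlinarith [sqrt_nonneg (2 * ε ^ 2 + 4 * ε + 4)]
  calc 1 / logb 2 (r / (r - 1)) ≤ r * log 2 := one_div_logb_div_sub_one_le one_lt_two hr1
    _ = r * ε * log 2 / ε := by field_simp
    _ < 5 / ε := by
      rw [hrε]
      exact div_lt_div_of_pos_right (add_sqrt_mul_log_two_lt_five hε0 hε1) hε0
end
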